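/- Let F ∈ R[x₁,…,xₙ] be a quasiconvex polynomial, a ∈ R^n a fixed point, and b ∈ R^n a nonzero fixed vector. If the univariate polynomial λ ↦ F(a + λb) is strictly decreasing on R, then for every x ∈ R^n the polynomial λ ↦ F(x + λb) is strictly decreasing on R. -/

import Mathlib

/-!
Every sublevel set `{F ≤ c}` is closed and convex, and since `F(a + t b) → -∞` as `t → ∞` it
contains a ray `a + [t₀, ∞) • b`. A closed convex set containing one ray in direction `b` contains
the ray in direction `b` from each of its points, so `t ↦ F(x + t b)` is antitone for every `x`.
If it were not strictly antitone, it would be constant on an interval, hence constant, being a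
polynomial. The line `x + ℝ b` would then lie in some `{F ≤ c}`, making `-b` a recession direction
of it as well; from a point `a + t₀ b ∈ {F ≤ c}` this gives `F(a + t b) ≤ c` for all `t ≤ t₀`,
contradicting `F(a + t b) → +∞` as `t → -∞`.
-/

open Filter Topology Set
open scoped Polynomial

section

variable {E : Type*} [AddCommGroup E] [Module ℝ E] {f : E → ℝ}

theorem QuasiconvexOn.convex_preimage_Iic (hf : QuasiconvexOn ℝ univ f) (r : ℝ) :
    Convex ℝ (f ⁻¹' Iic r) := by
  have h := hf r
  simp only [mem_univ, true_and] at h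
  exact h

variable [TopologicalSpace E] [IsTopologicalAddGroup E] [ContinuousSMul ℝ E]

theorem Convex.add_smul_mem_of_isClosed {C : Set E} (hC : Convex ℝ C) (hCc : IsClosed C)
    {p b : E} (hp : ∀ t : ℝ, 0 ≤ t → p + t • b ∈ C) {u : E} (hu : u ∈ C) {d : ℝ} (hd : 0 ≤ d) :
    u + d • b ∈ C := by
  -- `u + d • b` is the limit, as `s → 0⁺`, of the point at parameter `s` on the segment from
  -- `u` to `p + (d / s) • b`.
  have hmem : ∀ s ∈ Ioc (0 : ℝ) 1, u + d • b + s • (p - u) ∈ C := by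
    rintro s ⟨hs₀, hs₁⟩
    have h := hC hu (hp (d / s) (by positivity)) (sub_nonneg.2 hs₁) hs₀.le (sub_add_cancel 1 s)
    rwa [smul_add, smul_smul, mul_div_cancel₀ _ hs₀.ne',
      show (1 - s) • u + (s • p + d • b) = u + d • b + s • (p - u) by module] at h
  have hlim : Tendsto (fun s : ℝ => u + d • b + s • (p - u)) (𝓝[>] 0) (𝓝 (u + d • b)) := by
    have h : Continuous fun s : ℝ => u + d • b + s • (p - u) := by fun_prop
    simpa using (h.tendsto 0).mono_left nhdsWithin_le_nhds
  exact hCc.mem_of_tendsto hlim (mem_of_superset (Ioc_mem_nhdsGT zero_lt_one) hmem)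

theorem QuasiconvexOn.antitone_line_of_tendsto_atBot (hf : QuasiconvexOn ℝ univ f)
    (hlsc : LowerSemicontinuous f) {a b : E}
    (htop : Tendsto (fun t : ℝ => f (a + t • b)) atTop atBot) (x : E) :
    Antitone fun t : ℝ => f (x + t • b) := by
  intro l₁ l₂ hl
  obtain ⟨t₀, ht₀⟩ := eventually_atTop.1 (htop.eventually_le_atBot (f (x + l₁ • b)))
  have hray : ∀ t : ℝ, 0 ≤ t → a + t₀ • b + t • b ∈ f ⁻¹' Iic (f (x + l₁ • b)) := by
    intro t ht
    rw [add_assoc, ← add_smul]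
    exact ht₀ _ (by linarith)
  have h := (hf.convex_preimage_Iic _).add_smul_mem_of_isClosed (hlsc.isClosed_preimage _) hray
    (u := x + l₁ • b) (le_refl (f (x + l₁ • b))) (sub_nonneg.2 hl)
  rwa [add_assoc, ← add_smul, add_sub_cancel] at h

theorem QuasiconvexOn.not_bddAbove_line (hf : QuasiconvexOn ℝ univ f)
    (hlsc : LowerSemicontinuous f) {a b : E}
    (htop : Tendsto (fun t : ℝ => f (a + t • b)) atTop atBot)
    (hbot : Tendsto (fun t : ℝ => f (a + t • b)) atBot atTop) (x : E) :
    ¬BddAbove (range fun t : ℝ => f (x + t • b)) := by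
  rintro ⟨c, hc⟩
  obtain ⟨t₀, ht₀⟩ := (htop.eventually_le_atBot c).exists
  obtain ⟨s, hs, hst₀⟩ := ((hbot.eventually_gt_atTop c).and (eventually_le_atBot t₀)).exists
  have hray : ∀ t : ℝ, 0 ≤ t → x + t • -b ∈ f ⁻¹' Iic c := by
    intro t _
    rw [smul_neg, ← neg_smul]
    exact hc ⟨-t, rfl⟩
  have h := (hf.convex_preimage_Iic c).add_smul_mem_of_isClosed (hlsc.isClosed_preimage c) hray
    (u := a + t₀ • b) ht₀ (sub_nonneg.2 hst₀)
  rw [smul_neg, ← sub_eq_add_neg, add_sub_assoc, ← sub_smul, sub_sub_cancel] at h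
  exact (not_le.2 hs) h

end

theorem tendsto_atBot_of_tendsto_abs_of_eventually_le {α : Type*} {l : Filter α} {f : α → ℝ}
    {C : ℝ} (habs : Tendsto (fun x => |f x|) l atTop) (hle : ∀ᶠ x in l, f x ≤ C) :
    Tendsto f l atBot := by
  refine tendsto_atBot.2 fun M => ?_
  filter_upwards [habs.eventually_ge_atTop (|C| + |M| + 1), hle] with x hx hxC
  have := le_abs_self C
  have := abs_nonneg C
  have := neg_abs_le M
  have := abs_nonneg M
  rcases abs_cases (f x) with ⟨h, _⟩ | ⟨h, _⟩ <;> linarith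

namespace Polynomial

variable {p : ℝ[X]}

theorem zero_lt_degree_of_eval_ne {x y : ℝ} (h : p.eval x ≠ p.eval y) : 0 < p.degree := by
  by_contra! hdeg
  rw [eq_C_of_degree_le_zero hdeg] at h
  simp at h

theorem tendsto_atTop_atBot_of_strictAnti (h : StrictAnti fun x => p.eval x) :
    Tendsto (fun x => p.eval x) atTop atBot :=
  tendsto_atBot_of_tendsto_abs_of_eventually_le
    (p.abs_tendsto_atTop (zero_lt_degree_of_eval_ne (h zero_lt_one).ne))
    (eventually_ge_atTop 0 |>.mono fun _ hx => h.antitone hx)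

theorem tendsto_atBot_atTop_of_strictAnti (h : StrictAnti fun x => p.eval x) :
    Tendsto (fun x => p.eval x) atBot atTop :=
  tendsto_neg_atBot_iff.1 <| tendsto_atBot_of_tendsto_abs_of_eventually_le (C := -p.eval 0)
    (by simpa only [abs_neg] using
      p.abs_tendsto_atBot (zero_lt_degree_of_eval_ne (h zero_lt_one).ne))
    (eventually_le_atBot 0 |>.mono fun _ hx => neg_le_neg (h.antitone hx))

theorem strictAnti_of_antitone (h : Antitone fun x => p.eval x) (hp : 0 < p.degree) :
    StrictAnti fun x => p.eval x := by
  refine fun x y hxy => (h hxy.le).lt_of_ne fun heq => hp.not_ge ?_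
  have hC : p = C (p.eval x) := by
    refine eq_of_infinite_eval_eq _ _ ((Icc_infinite hxy).mono fun z hz => ?_)
    show p.eval z = (C (p.eval x)).eval z
    rw [eval_C]
    exact le_antisymm (h hz.1) (heq.symm.trans_le (h hz.2))
  exact hC ▸ degree_C_le

end Polynomial

open MvPolynomial

theorem MvPolynomial.eval_add_smul_eq_eval_aeval {σ R : Type*} [CommRing R]
    (F : MvPolynomial σ R) (x b : σ → R) (t : R) :
    eval (x + t • b) F
      = (aeval (fun i => Polynomial.C (x i) + Polynomial.C (b i) * Polynomial.X) F).eval t := by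
  have hline : (fun i => Polynomial.aeval t (Polynomial.C (x i) + Polynomial.C (b i) * Polynomial.X))
      = x + t • b := by
    funext i
    simp
    ring
  rw [← Polynomial.coe_aeval_eq_eval, ← AlgHom.comp_apply, comp_aeval, hline]
  rfl

theorem stmt3_general {n : ℕ} (F : MvPolynomial (Fin n) ℝ)
    (hq : ∀ α : ℝ, Convex ℝ {x : Fin n → ℝ | eval x F ≤ α})
    (a b : Fin n → ℝ)
    (hdec : StrictAnti fun l : ℝ => eval (a + l • b) F) :
    ∀ x : Fin n → ℝ, StrictAnti fun l : ℝ => eval (x + l • b) F := by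
  intro x
  have hqc : QuasiconvexOn ℝ univ fun y => eval y F := fun r => by
    simpa only [mem_univ, true_and] using hq r
  have hlsc := (continuous_eval F).lowerSemicontinuous
  set line := fun y : Fin n → ℝ =>
    aeval (fun i => Polynomial.C (y i) + Polynomial.C (b i) * Polynomial.X) F
  have hline : ∀ y t, eval (y + t • b) F = (line y).eval t := fun y =>
    eval_add_smul_eq_eval_aeval F y b
  simp only [hline] at hdec ⊢
  have htop := Polynomial.tendsto_atTop_atBot_of_strictAnti hdec
  have hbot := Polynomial.tendsto_atBot_atTop_of_strictAnti hdec
  simp only [← hline] at htop hbot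
  have hanti := hqc.antitone_line_of_tendsto_atBot hlsc htop x
  have hunbdd := hqc.not_bddAbove_line hlsc htop hbot x
  simp only [hline] at hanti hunbdd
  obtain ⟨_, ⟨t, rfl⟩, ht⟩ := not_bddAbove_iff.1 hunbdd ((line x).eval 0)
  exact Polynomial.strictAnti_of_antitone hanti (Polynomial.zero_lt_degree_of_eval_ne ht.ne)

theorem stmt3 {n : ℕ} (F : MvPolynomial (Fin n) ℝ)
    (hq : ∀ α : ℝ, Convex ℝ {x : Fin n → ℝ | eval x F ≤ α})
    (a b : Fin n → ℝ) (hb : b ≠ 0)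
    (hdec : StrictAnti fun l : ℝ => eval (a + l • b) F) :
    ∀ x : Fin n → ℝ, StrictAnti fun l : ℝ => eval (x + l • b) F :=
  stmt3_general F hq a b hdec
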